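/- Let G be a finite group and χ an irreducible complex character of G. Then χ is linear (i.e., χ(1) = 1) if and only if [Z(χ), G] = G', where Z(χ) = {g ∈ G : |χ(g)| = χ(1)} is the center of χ and G' is the commutator subgroup. -/

import Mathlib

open scoped Classical

def IsIrrChar (G : Type) [Group G] (χ : G → ℂ) : Prop :=
  ∃ V : FDRep ℂ G, CategoryTheory.Simple V ∧ χ = fun g => V.character g

def IsNlChar (G : Type) [Group G] (χ : G → ℂ) : Prop := IsIrrChar G χ ∧ χ 1 ≠ 1

def charCenter (G : Type) [Group G] (χ : G → ℂ) : Set G :=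
  {g | ‖χ g‖ = ‖χ 1‖}

def charKer (G : Type) [Group G] (χ : G → ℂ) : Set G := {g | χ g = χ 1}

open scoped commutatorElement in
def commSub (G : Type) [Group G] (S : Set G) : Subgroup G :=
  Subgroup.normalClosure {x | ∃ z ∈ S, ∃ g : G, x = ⁅z, g⁆}

def cdSet (G : Type) [Group G] : Set ℂ := {d | ∃ χ, IsIrrChar G χ ∧ χ 1 = d}

def IsGVZ (G : Type) [Group G] : Prop :=
  ∀ χ, IsIrrChar G χ → ∀ g, g ∉ charCenter G χ → χ g = 0

def charCenterSub (G : Type) [Group G] (χ : G → ℂ) : Subgroup G :=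
  Subgroup.normalClosure (charCenter G χ)

noncomputable def charInner (G : Type) [Group G] (φ ψ : G → ℂ) : ℂ :=
  (Nat.card G : ℂ)⁻¹ * ∑ᶠ g : G, φ g * star (ψ g)

noncomputable def inducedChar {G : Type} [Group G] (H : Subgroup G) (lam : H → ℂ) : G → ℂ :=
  fun g => (Nat.card H : ℂ)⁻¹ *
    ∑ᶠ x : G, if h : x * g * x⁻¹ ∈ H then lam ⟨x * g * x⁻¹, h⟩ else 0


instance (G : Type) [Group G] (S : Set G) : (commSub G S).Normal :=
  Subgroup.normalClosure_normal

instance (G : Type) [Group G] (χ : G → ℂ) : (charCenterSub G χ).Normal :=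
  Subgroup.normalClosure_normal

/-!
If `z ∈ Z(χ)`, then `ρ(z)` has finite order, so its eigenvalues are roots of unity, and
`|tr ρ(z)| = χ(1)` is the equality case of the triangle inequality: all eigenvalues coincide.
Since the minimal polynomial of `ρ(z)` divides the separable `Xⁿ - 1`, `ρ(z)` is then a scalar.
Hence `Z(χ)` is exactly the set of elements acting by scalars, and `[Z(χ), G] ≤ ker ρ`.
If this contains `G'`, then `ρ(G)` is commutative, so by Schur every `ρ(g)` is a scalar, and
`⟨χ, χ⟩ = χ(1)² = 1`. Conversely, for a linear `χ` every `ρ(g)` is a scalar, so `Z(χ) = G`.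
-/

open Polynomial Module CategoryTheory
open scoped commutatorElement

theorem Multiset.eq_of_norm_sum_eq_card {s : Multiset ℂ} (hs : ∀ x ∈ s, ‖x‖ = 1)
    (hsum : ‖s.sum‖ = Multiset.card s) {x y : ℂ} (hx : x ∈ s) (hy : y ∈ s) : x = y := by
  have hs0 : s ≠ 0 := by rintro rfl; simp at hx
  -- multiplication by `u` rotates `s.sum` onto the positive real axis
  set u : ℂ := star s.sum / ‖s.sum‖ with hu
  have hSu : s.sum * u = ‖s.sum‖ := by
    have hsum0 : (‖s.sum‖ : ℂ) ≠ 0 := by simp [hsum, hs0]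
    rw [hu, mul_div_assoc', Complex.star_def, Complex.mul_conj', sq, mul_div_cancel_right₀ _ hsum0]
  have hu1 : ‖u‖ = 1 := by simp [hu, hsum, hs0]
  have hre : ∀ z ∈ s, (z * u).re ≤ 1 := fun z hz =>
    (Complex.re_le_norm _).trans_eq (by rw [norm_mul, hs z hz, hu1, one_mul])
  have hsum_re : (s.map fun z => (z * u).re).sum = Multiset.card s := calc
    _ = Complex.reAddGroupHom (s.map (· * u)).sum := by
      rw [map_multiset_sum, Multiset.map_map]; rfl
    _ = Multiset.card s := by
      rw [Multiset.sum_map_mul_right, Multiset.map_id', hSu]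
      exact hsum
  have hone : ∀ z ∈ s, z * u = 1 := by
    intro z hz
    have hz1 : (z * u).re = 1 := by
      by_contra hne
      have := Multiset.sum_lt_sum (g := fun _ => (1 : ℝ)) hre
        ⟨z, hz, lt_of_le_of_ne (hre z hz) hne⟩
      simp only [hsum_re, Multiset.map_const', Multiset.sum_replicate, nsmul_one] at this
      exact lt_irrefl _ this
    have hnorm : (z * u).re = ‖z * u‖ := by rw [hz1, norm_mul, hs z hz, hu1, one_mul]
    rw [Complex.eq_coe_norm_of_nonneg (Complex.re_eq_norm.mp hnorm), ← hnorm, hz1,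
      Complex.ofReal_one]
  have hu0 : u ≠ 0 := by rw [← norm_ne_zero_iff, hu1]; exact one_ne_zero
  exact mul_right_cancel₀ hu0 ((hone x hx).trans (hone y hy).symm)

namespace Module.End

variable {K W : Type*} [Field K] [AddCommGroup W] [Module K W]

theorem HasEigenvalue.isOfFinOrder {f : End K W} {μ : K} (hμ : f.HasEigenvalue μ)
    (hf : IsOfFinOrder f) : IsOfFinOrder μ := by
  obtain ⟨n, hn, hfn⟩ := isOfFinOrder_iff_pow_eq_one.mp hf
  obtain ⟨v, hv⟩ := hμ.exists_hasEigenvector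
  refine isOfFinOrder_iff_pow_eq_one.mpr ⟨n, hn, smul_left_injective K hv.2 ?_⟩
  simpa [hfn] using (hv.pow_apply n).symm

variable [FiniteDimensional K W]

theorem trace_algebraMap (c : K) :
    LinearMap.trace K W (algebraMap K (End K W) c) = c * finrank K W := by
  rw [algebraMap_end_eq_smul_id, map_smul, LinearMap.trace_id, smul_eq_mul]

theorem eq_algebraMap_of_forall_mem_roots_charpoly_eq [IsAlgClosed K] [CharZero K]
    {f : End K W} (hf : IsOfFinOrder f) {c : K} (h : ∀ μ ∈ f.charpoly.roots, μ = c) :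
    f = algebraMap K (End K W) c := by
  have hchar : f.charpoly = (X - C c) ^ Multiset.card f.charpoly.roots := by
    conv_lhs => rw [(IsAlgClosed.splits f.charpoly).eq_prod_roots_of_monic f.charpoly_monic]
    rw [Multiset.eq_replicate.mpr ⟨rfl, h⟩, Multiset.map_replicate, Multiset.prod_replicate,
      Multiset.card_replicate]
  obtain ⟨n, hn, hfn⟩ := isOfFinOrder_iff_pow_eq_one.mp hf
  have hsq : Squarefree (minpoly K f) :=
    (X_pow_sub_one_separable_iff.mpr (by exact_mod_cast hn.ne')).squarefree.squarefree_of_dvd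
      (minpoly.dvd_iff.mpr (by simp [hfn]))
  have hdvd : minpoly K f ∣ X - C c := by
    have := f.minpoly_dvd_charpoly
    rw [hchar] at this
    rcases eq_or_ne (Multiset.card f.charpoly.roots) 0 with h0 | h0
    · rw [h0, pow_zero] at this
      exact (isUnit_of_dvd_one this).dvd
    · exact (hsq.dvd_pow_iff_dvd h0).mp this
  simpa [sub_eq_zero] using minpoly.dvd_iff.mp hdvd

variable {W : Type*} [AddCommGroup W] [Module ℂ W] [FiniteDimensional ℂ W]

theorem exists_eq_algebraMap_of_norm_trace_eq_finrank {f : End ℂ W} (hf : IsOfFinOrder f)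
    (htr : ‖LinearMap.trace ℂ W f‖ = finrank ℂ W) : ∃ c, f = algebraMap ℂ (End ℂ W) c := by
  have hsplits := IsAlgClosed.splits f.charpoly
  have hroots : ∀ μ ∈ f.charpoly.roots, ‖μ‖ = 1 := fun μ hμ =>
    ((hasEigenvalue_iff_isRoot_charpoly f μ).mpr (isRoot_of_mem_roots hμ)).isOfFinOrder hf
      |>.norm_eq_one
  have hsum : ‖f.charpoly.roots.sum‖ = Multiset.card f.charpoly.roots := by
    rw [← trace_eq_sum_roots_charpoly_of_splits hsplits, htr, splits_iff_card_roots.mp hsplits,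
      LinearMap.charpoly_natDegree]
  rcases f.charpoly.roots.empty_or_exists_mem with h0 | ⟨c, hc⟩
  · exact ⟨0, eq_algebraMap_of_forall_mem_roots_charpoly_eq hf (by simp [h0])⟩
  · exact ⟨c, eq_algebraMap_of_forall_mem_roots_charpoly_eq hf
      fun μ hμ => Multiset.eq_of_norm_sum_eq_card hroots hsum hμ hc⟩

theorem norm_trace_algebraMap_eq_finrank {c : ℂ}
    (hc : IsOfFinOrder (algebraMap ℂ (End ℂ W) c)) :
    ‖LinearMap.trace ℂ W (algebraMap ℂ (End ℂ W) c)‖ = finrank ℂ W := by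
  rw [trace_algebraMap, norm_mul, Complex.norm_natCast]
  rcases subsingleton_or_nontrivial W with hW | hW
  · simp [finrank_zero_of_subsingleton]
  have hc' : IsOfFinOrder c :=
    (Function.Injective.isOfFinOrder_iff (f := (algebraMap ℂ (End ℂ W)).toMonoidHom)
      (algebraMap ℂ (End ℂ W)).injective).mp hc
  rw [hc'.norm_eq_one, one_mul]

theorem norm_trace_eq_finrank_iff {f : End ℂ W} (hf : IsOfFinOrder f) :
    ‖LinearMap.trace ℂ W f‖ = finrank ℂ W ↔ ∃ c, f = algebraMap ℂ (End ℂ W) c :=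
  ⟨exists_eq_algebraMap_of_norm_trace_eq_finrank hf,
    by rintro ⟨c, rfl⟩; exact norm_trace_algebraMap_eq_finrank hf⟩

end Module.End

section CommSub

variable {G : Type} [Group G]

theorem commSub_univ : commSub G Set.univ = commutator G := by
  rw [commSub, commutator_eq_normalClosure]
  congr 1
  ext x
  simp [mem_commutatorSet_iff, eq_comm]

theorem commSub_le_ker {M : Type*} [Monoid M] (ρ : G →* M) {S : Set G}
    (hS : ∀ s ∈ S, ρ s ∈ Set.center M) : commSub G S ≤ ρ.ker := by
  refine Subgroup.normalClosure_le_normal ?_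
  rintro _ ⟨z, hz, g, rfl⟩
  rw [SetLike.mem_coe, MonoidHom.mem_ker, commutatorElement_def, map_mul, map_mul, map_mul,
    (Set.mem_center_iff.mp (hS z hz)).comm, mul_assoc (ρ g), ← map_mul, mul_inv_cancel,
    map_one, mul_one, ← map_mul, mul_inv_cancel, map_one]

theorem MonoidHom.commute_of_commutator_le_ker {M : Type*} [Monoid M] {ρ : G →* M}
    (h : commutator G ≤ ρ.ker) (g g' : G) : Commute (ρ g) (ρ g') := by
  have hker : ρ ⁅g, g'⁆ = 1 :=
    h (Subgroup.commutator_mem_commutator (Subgroup.mem_top g) (Subgroup.mem_top g'))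
  rw [Commute, SemiconjBy, ← map_mul, ← map_mul, show g * g' = ⁅g, g'⁆ * (g' * g) by group,
    map_mul, hker, one_mul]

end CommSub

namespace FDRep

variable {G : Type} [Group G]

theorem mem_charCenter_iff [Finite G] (V : FDRep ℂ G) {g : G} :
    g ∈ charCenter G V.character ↔ ∃ c, V.ρ g = algebraMap ℂ (End ℂ V) c := by
  rw [charCenter, Set.mem_ofPred_eq, char_one, Complex.norm_natCast]
  exact Module.End.norm_trace_eq_finrank_iff (V.ρ.isOfFinOrder (isOfFinOrder_of_finite g))

theorem charCenter_eq_univ_of_finrank_eq_one [Finite G] (V : FDRep ℂ G)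
    (hV : finrank ℂ V = 1) : charCenter G V.character = Set.univ := by
  refine Set.eq_univ_of_forall fun g => (mem_charCenter_iff V).mpr ?_
  obtain ⟨c, hc, -⟩ := LinearMap.existsUnique_eq_smul_id_of_finrank_eq_one hV (V.ρ g)
  exact ⟨c, by rw [hc, Module.algebraMap_end_eq_smul_id]⟩

variable {k : Type} [Field k] [IsAlgClosed k]

theorem exists_eq_algebraMap_of_forall_commute (V : FDRep k G) [Simple V] {g : G}
    (hg : ∀ h, Commute (V.ρ g) (V.ρ h)) : ∃ c, V.ρ g = algebraMap k (End k V) c := by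
  let φ : V ⟶ V := Action.Hom.mk (FGModuleCat.ofHom (V.ρ g)) fun h => by
    ext v
    exact LinearMap.congr_fun (hg h) v
  obtain ⟨c, hc⟩ := endomorphism_simple_eq_smul_id k φ
  exact ⟨c, (congrArg (fun f : V ⟶ V => f.hom.hom.hom) hc).symm⟩

theorem finrank_eq_one_of_forall_exists_eq_algebraMap [CharZero k] [Finite G] (V : FDRep k G)
    [Simple V] (h : ∀ g, ∃ c, V.ρ g = algebraMap k (End k V) c) : finrank k V = 1 := by
  have := Fintype.ofFinite G
  have hcard : (Nat.card G : k) ≠ 0 := Nat.cast_ne_zero.mpr Nat.card_pos.ne'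
  have := invertibleOfNonzero hcard
  have hterm : ∀ g : G, V.character g * V.character g⁻¹ = (finrank k V : k) ^ 2 := by
    intro g
    obtain ⟨c, hc⟩ := h g
    obtain ⟨c', hc'⟩ := h g⁻¹
    have hcc' : c * c' * finrank k V = finrank k V := by
      rw [← Module.End.trace_algebraMap, map_mul, ← hc, ← hc', ← map_mul, mul_inv_cancel,
        map_one, LinearMap.trace_one]
    rw [character, character, hc, hc', Module.End.trace_algebraMap, Module.End.trace_algebraMap]
    linear_combination (finrank k V : k) * hcc'
  have horth := char_orthonormal V V
  rw [if_pos ⟨Iso.refl V⟩, Finset.sum_congr rfl fun g _ => hterm g, Finset.sum_const,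
    Finset.card_univ, nsmul_eq_mul, ← mul_assoc, Fintype.card_eq_nat_card,
    inv_mul_cancel₀ hcard, one_mul] at horth
  exact (Nat.pow_eq_one.mp (by exact_mod_cast horth)).resolve_right two_ne_zero

end FDRep

theorem stmt0 (G : Type) [Group G] [Finite G] (χ : G → ℂ) (hχ : IsIrrChar G χ) :
    χ 1 = 1 ↔ commSub G (charCenter G χ) = commutator G := by
  obtain ⟨V, hV, rfl⟩ := hχ
  change V.character 1 = 1 ↔ commSub G (charCenter G V.character) = commutator G
  rw [FDRep.char_one, Nat.cast_eq_one]
  constructor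
  · intro hV1
    rw [FDRep.charCenter_eq_univ_of_finrank_eq_one V hV1, commSub_univ]
  · intro hcomm
    have hker : commutator G ≤ V.ρ.ker := hcomm ▸ commSub_le_ker V.ρ fun z hz => by
      obtain ⟨c, hc⟩ := (FDRep.mem_charCenter_iff V).mp hz
      exact hc ▸ Set.algebraMap_mem_center c
    exact FDRep.finrank_eq_one_of_forall_exists_eq_algebraMap V fun g =>
      FDRep.exists_eq_algebraMap_of_forall_commute V (V.ρ.commute_of_commutator_le_ker hker g)
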